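/- arXiv:2011.13815 — 2 statements merged into one kernel-verified Lean document; each statement's English description precedes it below -/
import Mathlib

section
/- If N ∼ Bin(n, p), then E|N + 1 - N^s| = p, where N^s is the size-biased version of N coupled so that N + 1 is stochastically larger than N^s; equivalently E[N+1] - E[N^s] = p and there exists a coupling achieving E|N+1-N^s| = p. -/
/-!
Write `n = m + 1`. The identity `k P(N = k) = n p P(Y = k - 1)` for `Y ∼ Bin(m, p)` says that
`N^s` has the law of `Y + 1`, so `E[N^s] = m p + 1 = E[N + 1] - p`. For the coupling take `Y`
and an independent Bernoulli(`p`) variable `B`, and put `N = Y + B`, `N^s = Y + 1`; then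
`N + 1 - N^s = B ≥ 0` has mean `p`.
-/

open MeasureTheory ProbabilityTheory Finset

noncomputable def binomialMass (n : ℕ) (p : ℝ) (k : ℕ) : ℝ :=
  n.choose k * p ^ k * (1 - p) ^ (n - k)

section BinomialMass

variable {p : ℝ}

lemma binomialMass_nonneg (hp0 : 0 ≤ p) (hp1 : p ≤ 1) (n k : ℕ) : 0 ≤ binomialMass n p k := by
  have : 0 ≤ 1 - p := by linarith
  unfold binomialMass
  positivity

lemma binomialMass_of_lt {n k : ℕ} (h : n < k) (p : ℝ) : binomialMass n p k = 0 := by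
  simp [binomialMass, Nat.choose_eq_zero_of_lt h]

lemma sum_binomialMass (n : ℕ) (p : ℝ) : ∑ k ∈ range (n + 1), binomialMass n p k = 1 := by
  have h := (add_pow p (1 - p) n).symm
  rw [add_sub_cancel, one_pow] at h
  rw [← h]
  exact sum_congr rfl fun k _ => by unfold binomialMass; ring

lemma binomialMass_succ_zero (m : ℕ) (p : ℝ) :
    binomialMass (m + 1) p 0 = binomialMass m p 0 * (1 - p) := by
  simp [binomialMass, pow_succ]

lemma binomialMass_succ_succ (m k : ℕ) (p : ℝ) :
    binomialMass (m + 1) p (k + 1)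
      = binomialMass m p k * p + binomialMass m p (k + 1) * (1 - p) := by
  unfold binomialMass
  rw [Nat.choose_succ_succ', Nat.add_sub_add_right]
  push_cast
  rcases le_or_gt (k + 1) m with h | h
  · rw [show m - k = m - (k + 1) + 1 by omega]
    ring
  · simp only [Nat.choose_eq_zero_of_lt h, Nat.cast_zero, add_zero, zero_mul]
    ring

lemma add_one_mul_binomialMass_add_one (m k : ℕ) (p : ℝ) :
    (k + 1) * binomialMass (m + 1) p (k + 1) = (m + 1) * p * binomialMass m p k := by
  have h : ((m : ℝ) + 1) * m.choose k = (m + 1).choose (k + 1) * (k + 1) := by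
    exact_mod_cast Nat.add_one_mul_choose_eq m k
  unfold binomialMass
  rw [Nat.add_sub_add_right]
  linear_combination (-(p ^ (k + 1) * (1 - p) ^ (m - k))) * h

lemma binomialMass_eq_sizeBias (hp : p ≠ 0) (m k : ℕ) :
    binomialMass m p k = (k + 1) * binomialMass (m + 1) p (k + 1) / ((m + 1) * p) := by
  rw [add_one_mul_binomialMass_add_one, mul_div_cancel_left₀ _ (mul_ne_zero (by positivity) hp)]

lemma sum_binomialMass_mul (n : ℕ) (p : ℝ) :
    ∑ k ∈ range (n + 1), binomialMass n p k * k = n * p := by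
  cases n with
  | zero => simp
  | succ m =>
    rw [sum_range_succ']
    push_cast
    simp_rw [mul_comm (binomialMass _ _ _), add_one_mul_binomialMass_add_one, ← mul_sum,
      sum_binomialMass]
    ring

lemma sum_binomialMass_mul_add_one (n : ℕ) (p : ℝ) :
    ∑ k ∈ range (n + 1), binomialMass n p k * (k + 1) = n * p + 1 := by
  simp_rw [mul_add_one, sum_add_distrib, sum_binomialMass_mul, sum_binomialMass]

end BinomialMass

section FinitelySupported

variable {α : Type*} [MeasurableSpace α] [MeasurableSingletonClass α]

lemma integral_eq_sum_of_ae_mem_finset {E : Type*} [NormedAddCommGroup E] [NormedSpace ℝ E]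
    [CompleteSpace E] {μ : Measure α} [IsFiniteMeasure μ] {s : Finset α} (hs : ∀ᵐ x ∂μ, x ∈ s)
    (g : α → E) : ∫ x, g x ∂μ = ∑ x ∈ s, μ.real {x} • g x := by
  rw [← setIntegral_finset s IntegrableOn.finset, setIntegral_eq_integral_of_ae_compl_eq_zero]
  filter_upwards [hs] with x hx hxs using absurd hx hxs

lemma exists_isProbabilityMeasure_measureReal_singleton (w : α → ℝ) (hw : ∀ x, 0 ≤ w x)
    (s : Finset α) (hws : ∀ x ∉ s, w x = 0) (hsum : ∑ x ∈ s, w x = 1) :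
    ∃ μ : Measure α, IsProbabilityMeasure μ ∧ (∀ x, μ.real {x} = w x) ∧ ∀ᵐ x ∂μ, x ∈ s := by
  let Φ := PMF.ofFinset (fun x => ENNReal.ofReal (w x)) s
    (by rw [← ENNReal.ofReal_sum_of_nonneg fun x _ => hw x, hsum, ENNReal.ofReal_one])
    (fun x hx => by simp [hws x hx])
  have hnull : Φ.toMeasure (↑s)ᶜ = 0 := by
    rw [Φ.toMeasure_apply_eq_zero_iff s.measurableSet.compl, PMF.support_ofFinset]
    exact disjoint_compl_right.mono_left Set.inter_subset_left
  refine ⟨Φ.toMeasure, inferInstance, fun x => ?_,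
    by simpa using measure_eq_zero_iff_ae_notMem.1 hnull⟩
  rw [measureReal_def, Φ.toMeasure_apply_singleton x (measurableSet_singleton x)]
  exact ENNReal.toReal_ofReal (hw x)

end FinitelySupported

section NatValued

variable {Ω : Type*} [MeasurableSpace Ω] {μ : Measure Ω} [IsFiniteMeasure μ] {f : Ω → ℕ}

lemma integral_comp_eq_sum_range (hf : Measurable f) {q : ℕ → ℝ}
    (hq : ∀ k, μ.real {ω | f ω = k} = q k) {K : ℕ} (hK : ∀ k, K < k → q k = 0) (g : ℕ → ℝ) :
    ∫ ω, g (f ω) ∂μ = ∑ k ∈ range (K + 1), q k * g k := by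
  have hlaw : ∀ k, (μ.map f).real {k} = q k := fun k => by
    rw [map_measureReal_apply hf (measurableSet_singleton k)]
    exact hq k
  have hnull : ∀ j, ∀ᵐ k ∂(μ.map f), K < j → k ≠ j := fun j => by
    by_cases hj : K < j
    · have h0 : μ.map f {j} = 0 := (measureReal_eq_zero_iff).1 ((hlaw j).trans (hK j hj))
      filter_upwards [measure_eq_zero_iff_ae_notMem.1 h0] with k hk _ using hk
    · exact Filter.Eventually.of_forall fun k h => absurd h hj
  have hsupp : ∀ᵐ k ∂(μ.map f), k ∈ range (K + 1) := by
    filter_upwards [ae_all_iff.2 hnull] with k hk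
    exact mem_range.2 (Nat.lt_succ_of_le (not_lt.1 fun h => hk k h rfl))
  rw [← integral_map hf.aemeasurable (measurable_of_countable g).aestronglyMeasurable,
    integral_eq_sum_of_ae_mem_finset hsupp]
  exact sum_congr rfl fun k _ => by rw [hlaw, smul_eq_mul]

lemma integral_natCast_of_binomial (hf : Measurable f) {n : ℕ} {p : ℝ}
    (hlaw : ∀ k, μ.real {ω | f ω = k} = binomialMass n p k) :
    ∫ ω, (f ω : ℝ) ∂μ = n * p :=
  (integral_comp_eq_sum_range hf hlaw (fun _ hk => binomialMass_of_lt hk p) Nat.cast).trans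
    (sum_binomialMass_mul n p)

lemma integral_natCast_of_sizeBiased_binomial (hf : Measurable f) {m : ℕ} {p : ℝ} (hp : p ≠ 0)
    (hlaw : ∀ j, μ.real {ω | f ω = j} = j * binomialMass (m + 1) p j / ((m + 1) * p)) :
    ∫ ω, (f ω : ℝ) ∂μ = m * p + 1 := by
  have hK : ∀ j, m + 1 < j → j * binomialMass (m + 1) p j / ((m + 1) * p) = 0 := fun j hj => by
    rw [binomialMass_of_lt hj, mul_zero, zero_div]
  rw [integral_comp_eq_sum_range hf hlaw hK Nat.cast, sum_range_succ']
  push_cast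
  simp only [mul_zero, add_zero, ← binomialMass_eq_sizeBias hp]
  exact sum_binomialMass_mul_add_one m p

end NatValued

theorem exists_binomial_sizeBiased_coupling (m : ℕ) {p : ℝ} (hp0 : 0 < p) (hp1 : p ≤ 1) :
    ∃ (Ω' : Type) (_ : MeasurableSpace Ω') (μ : Measure Ω') (_ : IsProbabilityMeasure μ)
        (M S : Ω' → ℕ), Measurable M ∧ Measurable S
          ∧ (∀ k : ℕ, μ.real {ω | M ω = k} = binomialMass (m + 1) p k)
          ∧ (∀ j : ℕ, μ.real {ω | S ω = j}
              = j * μ.real {ω | M ω = j} / ∫ ω, (M ω : ℝ) ∂μ)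
          ∧ ∫ ω, |(M ω : ℝ) + 1 - (S ω : ℝ)| ∂μ = p := by
  obtain ⟨μ, hμ, hsingle, hsupp⟩ := exists_isProbabilityMeasure_measureReal_singleton
    (fun x : ℕ × Bool => binomialMass m p x.1 * if x.2 then p else 1 - p)
    (fun x => mul_nonneg (binomialMass_nonneg hp0.le hp1 m x.1) (by split_ifs <;> linarith))
    (range (m + 1) ×ˢ univ)
    (fun x hx => by simp [binomialMass_of_lt (by simpa using hx : m < x.1)])
    (by simp_rw [sum_product, Fintype.sum_bool, if_true, Bool.false_eq_true, if_false, ← mul_add,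
      add_sub_cancel, mul_one, sum_binomialMass])
  let M : ℕ × Bool → ℕ := fun x => x.1 + x.2.toNat
  let S : ℕ × Bool → ℕ := fun x => x.1 + 1
  have hM : ∀ k, μ.real {x | M x = k} = binomialMass (m + 1) p k := by
    rintro (_ | k)
    · have h : {x | M x = 0} = {(0, false)} := by ext ⟨y, b⟩; cases b <;> simp [M]
      rw [h, hsingle, binomialMass_succ_zero]
      simp
    · have h : {x | M x = k + 1} = ↑({(k, true), (k + 1, false)} : Finset (ℕ × Bool)) := by
        ext ⟨y, b⟩; cases b <;> simp [M]
      rw [h, ← sum_measureReal_singleton, sum_pair (by simp), hsingle, hsingle,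
        binomialMass_succ_succ]
      simp
  have hEM : ∫ x, (M x : ℝ) ∂μ = (m + 1) * p := by
    simpa using integral_natCast_of_binomial (measurable_of_countable M) hM
  have hS : ∀ j, μ.real {x | S x = j} = j * binomialMass (m + 1) p j / ((m + 1) * p) := by
    rintro (_ | j)
    · simp [S]
    · have h : {x | S x = j + 1} = ↑({(j, true), (j, false)} : Finset (ℕ × Bool)) := by
        ext ⟨y, b⟩; cases b <;> simp [S]
      rw [h, ← sum_measureReal_singleton, sum_pair (by simp), hsingle, hsingle]
      push_cast
      rw [← binomialMass_eq_sizeBias hp0.ne']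
      simp only [if_true]
      ring
  have hgap : ∫ x, |(M x : ℝ) + 1 - (S x : ℝ)| ∂μ = p := by
    rw [integral_eq_sum_of_ae_mem_finset hsupp, sum_product]
    simp [M, S, hsingle, ← sum_mul, sum_binomialMass]
  refine ⟨ℕ × Bool, inferInstance, μ, hμ, M, S, measurable_of_countable M,
    measurable_of_countable S, hM, fun j => ?_, hgap⟩
  rw [hS, hM, hEM]

/-- For `N ∼ Bin(n,p)`: `E[N+1] - E[N^s] = p`, and there is a coupling of `N+1` and `N^s`
achieving `E|N+1-N^s| = p`. -/
theorem sizeBiased_binomial_coupling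
    {Ω : Type*} [MeasureSpace Ω] [IsProbabilityMeasure (ℙ : Measure Ω)]
    (n : ℕ) (hn : 1 ≤ n) (p : ℝ) (hp0 : 0 < p) (hp1 : p ≤ 1)
    (N Ns : Ω → ℕ) (hN : Measurable N) (hNs : Measurable Ns)
    (hbin : ∀ k : ℕ, (ℙ {ω | N ω = k}).toReal = (n.choose k : ℝ) * p ^ k * (1 - p) ^ (n - k))
    (hsize : ∀ j : ℕ, (ℙ {ω | Ns ω = j}).toReal
      = j * (ℙ {ω | N ω = j}).toReal / ∫ ω, (N ω : ℝ) ∂ℙ) :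
    ((∫ ω, ((N ω : ℝ) + 1) ∂ℙ) - (∫ ω, (Ns ω : ℝ) ∂ℙ) = p)
    ∧ ∃ (Ω' : Type) (_ : MeasurableSpace Ω') (μ : Measure Ω') (_ : IsProbabilityMeasure μ)
        (M S : Ω' → ℕ), Measurable M ∧ Measurable S
          ∧ (∀ k : ℕ, (μ {ω | M ω = k}).toReal
              = (n.choose k : ℝ) * p ^ k * (1 - p) ^ (n - k))
          ∧ (∀ j : ℕ, (μ {ω | S ω = j}).toReal
              = j * (μ {ω | M ω = j}).toReal / ∫ ω, (M ω : ℝ) ∂μ)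
          ∧ ∫ ω, |(M ω : ℝ) + 1 - (S ω : ℝ)| ∂μ = p := by
  obtain ⟨m, rfl⟩ : ∃ m, n = m + 1 := ⟨n - 1, by omega⟩
  have hlawN : ∀ k, (ℙ : Measure Ω).real {ω | N ω = k} = binomialMass (m + 1) p k := hbin
  have hEN : ∫ ω, (N ω : ℝ) ∂ℙ = (m + 1) * p := by
    simpa using integral_natCast_of_binomial hN hlawN
  have hlawNs : ∀ j, (ℙ : Measure Ω).real {ω | Ns ω = j}
      = j * binomialMass (m + 1) p j / ((m + 1) * p) :=
    fun j => (hsize j).trans (by rw [hbin j, hEN]; rfl)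
  have hEN1 : ∫ ω, ((N ω : ℝ) + 1) ∂ℙ = (m + 1) * p + 1 := by
    rw [integral_comp_eq_sum_range hN hlawN (fun _ hk => binomialMass_of_lt hk p) (· + 1),
      sum_binomialMass_mul_add_one]
    push_cast
    ring
  refine ⟨?_, exists_binomial_sizeBiased_coupling m hp0 hp1⟩
  rw [hEN1, integral_natCast_of_sizeBiased_binomial hNs hp0.ne' hlawNs]
  ring
end

section
/- If Λ is a positive random variable with finite second moment and N ∼ Po(Λ) is a mixed Poisson random variable, then the size-biased version satisfies N^s - 1 ∼ Po(Λ^s), where Λ^s is the size-biased version of Λ. -/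
open MeasureTheory ProbabilityTheory Real
open scoped ENNReal Nat

/-! The Poisson weights `p k λ = e^{-λ} λ^k / k!` satisfy
`λ · p k λ = (k + 1) · p (k + 1) λ`.
Summing over `k` gives `E[N] = E[Λ]`, and then
`P(N^s = k + 1) = (k + 1) P(N = k + 1) / E[N] = E[Λ · p k Λ] / E[Λ] = E[p k Λ^s]`.
Since `P(N^s = 0) = 0`, the event `N^s - 1 = k` is a.s. the event `N^s = k + 1`. -/

lemma hasSum_poisson (x : ℝ) : HasSum (fun k : ℕ => exp (-x) * x ^ k / k !) 1 := by
  have h := (NormedSpace.expSeries_div_hasSum_exp x).mul_left (exp (-x))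
  rw [← exp_eq_exp_ℝ, ← exp_add, neg_add_cancel, exp_zero] at h
  exact h.congr_fun fun k => mul_div_assoc ..

lemma poisson_le_one {x : ℝ} (hx : 0 ≤ x) (k : ℕ) : exp (-x) * x ^ k / k ! ≤ 1 :=
  calc exp (-x) * x ^ k / k ! = exp (-x) * (x ^ k / k !) := mul_div_assoc ..
    _ ≤ exp (-x) * exp x := by gcongr; exact pow_div_factorial_le_exp x hx k
    _ = 1 := by rw [← exp_add, neg_add_cancel, exp_zero]

lemma mul_poisson_eq_succ_mul (x : ℝ) (k : ℕ) :
    x * (exp (-x) * x ^ k / k !) = (k + 1) * (exp (-x) * x ^ (k + 1) / (k + 1)!) := by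
  rw [Nat.factorial_succ, Nat.cast_mul]
  field_simp
  push_cast
  ring

lemma hasSum_natCast_mul_poisson (x : ℝ) :
    HasSum (fun k : ℕ => k * (exp (-x) * x ^ k / k !)) x := by
  have hshift :
      HasSum (fun k : ℕ => ((k + 1 : ℕ) : ℝ) * (exp (-x) * x ^ (k + 1) / (k + 1)!)) x := by
    have h := (hasSum_poisson x).mul_left x
    rw [mul_one] at h
    refine h.congr_fun fun k => ?_
    rw [mul_poisson_eq_succ_mul, Nat.cast_succ]
  simpa using
    (hasSum_nat_add_iff (f := fun k : ℕ => (k : ℝ) * (exp (-x) * x ^ k / k !)) 1).mp hshift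

section

variable {Ω : Type*} [MeasurableSpace Ω]

def IsMixedPoisson (μ : Measure Ω) (N : Ω → ℕ) (Λ : Ω → ℝ) : Prop :=
  ∀ k : ℕ, (μ {ω | N ω = k}).toReal = ∫ ω, exp (-Λ ω) * Λ ω ^ k / (k ! : ℝ) ∂μ

def IsSizeBiased (μ : Measure Ω) (Λs Λ : Ω → ℝ) : Prop :=
  ∀ g : ℝ → ℝ, Measurable g → Integrable (fun ω => g (Λs ω)) μ →
    Integrable (fun ω => Λ ω * g (Λ ω)) μ →
    ∫ ω, g (Λs ω) ∂μ = (∫ ω, Λ ω * g (Λ ω) ∂μ) / ∫ ω, Λ ω ∂μ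

variable {μ : Measure Ω}

lemma lintegral_natCast_eq_tsum {N : Ω → ℕ} (hN : Measurable N) :
    ∫⁻ ω, (N ω : ℝ≥0∞) ∂μ = ∑' k : ℕ, k * μ {ω | N ω = k} := by
  rw [← lintegral_map (measurable_of_countable _) hN, lintegral_countable']
  congr with k
  rw [Measure.map_apply hN (measurableSet_singleton k)]
  rfl

lemma measure_sub_one_eq_measure_succ {N : Ω → ℕ} (h0 : μ {ω | N ω = 0} = 0) (k : ℕ) :
    μ {ω | N ω - 1 = k} = μ {ω | N ω = k + 1} := by
  refine measure_congr (Filter.eventuallyEq_set.mpr ?_)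
  filter_upwards [measure_eq_zero_iff_ae_notMem.mp h0] with ω (hω : N ω ≠ 0)
  omega

variable [IsFiniteMeasure μ] {Λ Λs : Ω → ℝ}

lemma integrable_poisson_comp (hΛ : Measurable Λ) (hΛ0 : 0 ≤ᵐ[μ] Λ) (k : ℕ) :
    Integrable (fun ω => exp (-Λ ω) * Λ ω ^ k / k !) μ := by
  refine .of_bound (by fun_prop : Measurable _).aestronglyMeasurable 1 ?_
  filter_upwards [hΛ0] with ω (hω : 0 ≤ Λ ω)
  rw [Real.norm_of_nonneg (by positivity)]
  exact poisson_le_one hω k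

namespace IsMixedPoisson

variable {N : Ω → ℕ} (h : IsMixedPoisson μ N Λ) (hΛ : Measurable Λ) (hΛ0 : 0 ≤ᵐ[μ] Λ)
include h hΛ hΛ0

lemma measure_eq_lintegral (k : ℕ) :
    μ {ω | N ω = k} = ∫⁻ ω, ENNReal.ofReal (exp (-Λ ω) * Λ ω ^ k / k !) ∂μ := by
  rw [← ofReal_integral_eq_lintegral_ofReal (integrable_poisson_comp hΛ hΛ0 k)
    (hΛ0.mono fun ω (hω : 0 ≤ Λ ω) => by positivity), ← h k,
    ENNReal.ofReal_toReal (measure_ne_top _ _)]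

lemma lintegral_natCast (hN : Measurable N) :
    ∫⁻ ω, (N ω : ℝ≥0∞) ∂μ = ∫⁻ ω, ENNReal.ofReal (Λ ω) ∂μ := by
  have hterm (k : ℕ) : Measurable fun ω => (k : ℝ) * (exp (-Λ ω) * Λ ω ^ k / k !) := by
    fun_prop
  calc ∫⁻ ω, (N ω : ℝ≥0∞) ∂μ
      = ∑' k : ℕ, k * μ {ω | N ω = k} := lintegral_natCast_eq_tsum hN
    _ = ∑' k : ℕ, ∫⁻ ω, ENNReal.ofReal (k * (exp (-Λ ω) * Λ ω ^ k / k !)) ∂μ := by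
      refine tsum_congr fun k => ?_
      rw [h.measure_eq_lintegral hΛ hΛ0, ← lintegral_const_mul _ (by fun_prop)]
      refine lintegral_congr fun ω => ?_
      rw [ENNReal.ofReal_mul (Nat.cast_nonneg k), ENNReal.ofReal_natCast]
    _ = ∫⁻ ω, ∑' k : ℕ, ENNReal.ofReal (k * (exp (-Λ ω) * Λ ω ^ k / k !)) ∂μ :=
      (lintegral_tsum fun k => (hterm k).ennreal_ofReal.aemeasurable).symm
    _ = ∫⁻ ω, ENNReal.ofReal (Λ ω) ∂μ := by
      refine lintegral_congr_ae (hΛ0.mono fun ω (hω : 0 ≤ Λ ω) => ?_)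
      have hsum := hasSum_natCast_mul_poisson (Λ ω)
      dsimp only
      rw [← ENNReal.ofReal_tsum_of_nonneg (fun k => by positivity) hsum.summable, hsum.tsum_eq]

lemma integral_natCast (hN : Measurable N) : ∫ ω, (N ω : ℝ) ∂μ = ∫ ω, Λ ω ∂μ := by
  rw [integral_eq_lintegral_of_nonneg_ae (ae_of_all _ fun ω => Nat.cast_nonneg _) (by fun_prop),
    integral_eq_lintegral_of_nonneg_ae hΛ0 hΛ.aestronglyMeasurable,
    ← h.lintegral_natCast hΛ hΛ0 hN]
  simp_rw [ENNReal.ofReal_natCast]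

end IsMixedPoisson

namespace IsSizeBiased

variable (h : IsSizeBiased μ Λs Λ) (hΛ0 : 0 ≤ᵐ[μ] Λ) (hΛs : Measurable Λs)
include h hΛ0 hΛs

lemma ae_nonneg : 0 ≤ᵐ[μ] Λs := by
  have hneg : MeasurableSet (Λs ⁻¹' Set.Iio 0) := hΛs measurableSet_Iio
  have hzero : (fun ω => Λ ω * (Set.Iio 0).indicator 1 (Λ ω)) =ᵐ[μ] 0 :=
    hΛ0.mono fun ω (hω : 0 ≤ Λ ω) => by simp [hω]
  have hbias := h ((Set.Iio 0).indicator 1) (measurable_one.indicator measurableSet_Iio)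
    ((integrable_const 1).indicator hneg) ((integrable_zero _ _ _).congr hzero.symm)
  rw [integral_congr_ae hzero] at hbias
  simp only [Pi.zero_apply, integral_zero, zero_div] at hbias
  have hind : (fun ω => (Set.Iio 0).indicator 1 (Λs ω))
      = (Λs ⁻¹' Set.Iio 0).indicator (1 : Ω → ℝ) :=
    funext fun ω => (Set.indicator_comp_right Λs (g := 1)).symm
  rw [hind, integral_indicator_one hneg, measureReal_eq_zero_iff] at hbias
  filter_upwards [measure_eq_zero_iff_ae_notMem.mp hbias] with ω hω
  simpa using hω

lemma integral_poisson (hΛ : Measurable Λ) (k : ℕ) :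
    ∫ ω, exp (-Λs ω) * Λs ω ^ k / (k ! : ℝ) ∂μ
      = (k + 1) * (∫ ω, exp (-Λ ω) * Λ ω ^ (k + 1) / ((k + 1)! : ℝ) ∂μ)
        / ∫ ω, Λ ω ∂μ := by
  -- `|x|` makes the test function bounded on all of `ℝ`; it is the Poisson weight on `[0, ∞)`.
  set g : ℝ → ℝ := fun x => exp (-|x|) * |x| ^ k / (k ! : ℝ)
  have hgΛs : (fun ω => g (Λs ω)) =ᵐ[μ] fun ω => exp (-Λs ω) * Λs ω ^ k / k ! :=
    (h.ae_nonneg hΛ0 hΛs).mono fun ω (hω : 0 ≤ Λs ω) => by simp only [g, abs_of_nonneg hω]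
  have hgΛ : (fun ω => Λ ω * g (Λ ω)) =ᵐ[μ]
      fun ω => (k + 1) * (exp (-Λ ω) * Λ ω ^ (k + 1) / (k + 1)!) :=
    hΛ0.mono fun ω (hω : 0 ≤ Λ ω) => by
      simp only [g, abs_of_nonneg hω]
      exact mul_poisson_eq_succ_mul _ _
  have hbias := h g (by fun_prop)
    (integrable_poisson_comp hΛs.abs (ae_of_all _ fun ω => abs_nonneg _) k)
    (((integrable_poisson_comp hΛ hΛ0 (k + 1)).const_mul _).congr hgΛ.symm)
  rw [← integral_congr_ae hgΛs, hbias, integral_congr_ae hgΛ, integral_const_mul]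

end IsSizeBiased

end

theorem sizeBiased_mixedPoisson_general
    {Ω : Type*} [MeasureSpace Ω] [IsProbabilityMeasure (ℙ : Measure Ω)]
    (Lam Lams : Ω → ℝ) (hLam : Measurable Lam) (hLams : Measurable Lams)
    (hLpos : ∀ᵐ ω ∂ℙ, 0 < Lam ω)
    (N Ns : Ω → ℕ) (hN : Measurable N)
    (hmp : ∀ k : ℕ, (ℙ {ω | N ω = k}).toReal
      = ∫ ω, Real.exp (-Lam ω) * Lam ω ^ k / (Nat.factorial k) ∂ℙ)
    (hNsize : ∀ j : ℕ, (ℙ {ω | Ns ω = j}).toReal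
      = j * (ℙ {ω | N ω = j}).toReal / ∫ ω, (N ω : ℝ) ∂ℙ)
    (hLsize : ∀ g : ℝ → ℝ, Measurable g → Integrable (fun ω => g (Lams ω)) ℙ →
      Integrable (fun ω => Lam ω * g (Lam ω)) ℙ →
      ∫ ω, g (Lams ω) ∂ℙ = (∫ ω, Lam ω * g (Lam ω) ∂ℙ) / ∫ ω, Lam ω ∂ℙ) :
    ∀ k : ℕ, (ℙ {ω | Ns ω - 1 = k}).toReal
      = ∫ ω, Real.exp (-Lams ω) * Lams ω ^ k / (Nat.factorial k) ∂ℙ := by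
  have hΛ0 : 0 ≤ᵐ[ℙ] Lam := hLpos.mono fun _ hω => hω.le
  have hNs0 : ℙ {ω | Ns ω = 0} = 0 :=
    (measureReal_eq_zero_iff).mp (by simpa [measureReal_def] using hNsize 0)
  intro k
  rw [measure_sub_one_eq_measure_succ hNs0, hNsize, hmp,
    IsMixedPoisson.integral_natCast hmp hLam hΛ0 hN,
    IsSizeBiased.integral_poisson hLsize hΛ0 hLams hLam]
  push_cast
  ring

/-- For a mixed Poisson `N ∼ Po(Λ)`, the size-biased version satisfies
`N^s - 1 ∼ Po(Λ^s)` where `Λ^s` is the size-biased version of `Λ`. -/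
theorem sizeBiased_mixedPoisson
    {Ω : Type*} [MeasureSpace Ω] [IsProbabilityMeasure (ℙ : Measure Ω)]
    (Lam Lams : Ω → ℝ) (hLam : Measurable Lam) (hLams : Measurable Lams)
    (hLpos : ∀ᵐ ω ∂ℙ, 0 < Lam ω) (hL2 : MemLp Lam 2 ℙ)
    (N Ns : Ω → ℕ) (hN : Measurable N) (hNs : Measurable Ns)
    (hmp : ∀ k : ℕ, (ℙ {ω | N ω = k}).toReal
      = ∫ ω, Real.exp (-Lam ω) * Lam ω ^ k / (Nat.factorial k) ∂ℙ)
    (hNsize : ∀ j : ℕ, (ℙ {ω | Ns ω = j}).toReal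
      = j * (ℙ {ω | N ω = j}).toReal / ∫ ω, (N ω : ℝ) ∂ℙ)
    (hLsize : ∀ g : ℝ → ℝ, Measurable g → Integrable (fun ω => g (Lams ω)) ℙ →
      Integrable (fun ω => Lam ω * g (Lam ω)) ℙ →
      ∫ ω, g (Lams ω) ∂ℙ = (∫ ω, Lam ω * g (Lam ω) ∂ℙ) / ∫ ω, Lam ω ∂ℙ) :
    ∀ k : ℕ, (ℙ {ω | Ns ω - 1 = k}).toReal
      = ∫ ω, Real.exp (-Lams ω) * Lams ω ^ k / (Nat.factorial k) ∂ℙ :=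
  sizeBiased_mixedPoisson_general Lam Lams hLam hLams hLpos N Ns hN hmp hNsize hLsize
end
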